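/- With the order < of iterated power sets as above, define a successor relation: at level 0, sc({0},{1}) only; at level r+1, sc(A,B) iff there exists a level-r element c with c ∈ B \ A, every level-r element c* < c satisfies c* ∈ A \ B, and every level-r element c* > c satisfies c* ∈ A ↔ c* ∈ B. Then sc(A,B) holds if and only if B is the immediate successor of A in the total order <. -/

import Mathlib

/-- The `r`-th iterated power set of the two-element set `{{0},{1}}`:
`It 0` is the two-element type (`false` for `{0}`, `true` for `{1}`) and
`It (r+1) = powerset (It r)`. -/
def It : ℕ → Type
  | 0 => Bool
  | r + 1 => Set (It r)

/-- Membership between consecutive levels (`It (r+1)` is `Set (It r)`). -/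
def itMem {r : ℕ} (c : It r) (A : It (r + 1)) : Prop := A c

instance {r : ℕ} : Membership (It r) (It (r + 1)) := ⟨fun A c => itMem c A⟩

/-- The recursively defined strict order: `{0} < {1}` at level `0`, and at level
`r+1`, `A < B` iff some level-`r` element `c ∈ B \ A` is such that all `c* > c`
agree between `A` and `B`. -/
def ltIt : (r : ℕ) → It r → It r → Prop
  | 0, a, b => a = false ∧ b = true
  | r + 1, A, B => ∃ c : It r, c ∈ B ∧ c ∉ A ∧
      ∀ c' : It r, ltIt r c c' → (c' ∈ A ↔ c' ∈ B)

/-- The successor relation, mirroring binary increment: at level `0` only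
`sc({0},{1})`; at level `r+1`, `sc(A,B)` iff some level-`r` element `c ∈ B \ A`
has every `c* < c` in `A \ B` and every `c* > c` agreeing between `A` and `B`. -/
def scIt : (r : ℕ) → It r → It r → Prop
  | 0, a, b => a = false ∧ b = true
  | r + 1, A, B => ∃ c : It r, c ∈ B ∧ c ∉ A ∧
      (∀ c' : It r, ltIt r c' c → c' ∈ A ∧ c' ∉ B) ∧
      (∀ c' : It r, ltIt r c c' → (c' ∈ A ↔ c' ∈ B))

/-!
At level `r + 1`, `A < B` means that `B` contains the largest element on which `A` and `B`
differ. Each level is finite, so such a largest element exists, and induction on `r` makes every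
level a strict total order.

Let `c` witness `A < B`; `sc(A, B)` adds that every `c' < c` lies in `A \ B`. If so, `A` and `B`
differ only at `c` and below it, which leaves no room for a `C` strictly between them. If some
`c' < c` is missing from `A`, then `A ∪ {c'}` lies strictly between `A` and `B`; if some `c' < c`
lies in `B`, then `B \ {c'}` does.
-/

instance It.instFinite : (r : ℕ) → Finite (It r)
  | 0 => inferInstanceAs (Finite Bool)
  | r + 1 => have := It.instFinite r; inferInstanceAs (Finite (Set (It r)))

theorem It.ext_succ {r : ℕ} {A B : It (r + 1)} (h : ∀ x : It r, x ∈ A ↔ x ∈ B) : A = B :=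
  funext fun x => propext (h x)

theorem ltIt_irrefl (r : ℕ) (a : It r) : ¬ ltIt r a a := by
  cases r with
  | zero => rintro ⟨rfl, h⟩; cases h
  | succ r => rintro ⟨c, hc, hc', -⟩; exact hc' hc

theorem ltIt_succ_trans {r : ℕ} [IsStrictTotalOrder (It r) (ltIt r)] {A B C : It (r + 1)}
    (hAB : ltIt (r + 1) A B) (hBC : ltIt (r + 1) B C) : ltIt (r + 1) A C := by
  obtain ⟨c, hcB, hcA, hAB⟩ := hAB
  obtain ⟨d, hdC, hdB, hBC⟩ := hBC
  rcases trichotomous_of (ltIt r) c d with hcd | rfl | hdc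
  · exact ⟨d, hdC, fun hdA => hdB ((hAB d hcd).1 hdA),
      fun x hx => (hAB x (trans_of _ hcd hx)).trans (hBC x hx)⟩
  · exact absurd hcB hdB
  · exact ⟨c, (hBC c hdc).1 hcB, hcA,
      fun x hx => (hAB x hx).trans (hBC x (trans_of _ hdc hx))⟩

theorem eq_of_not_ltIt_succ {r : ℕ} [IsStrictTotalOrder (It r) (ltIt r)] {A B : It (r + 1)}
    (hAB : ¬ ltIt (r + 1) A B) (hBA : ¬ ltIt (r + 1) B A) : A = B := by
  by_contra hne
  have hdiff : ∃ x : It r, ¬ (x ∈ A ↔ x ∈ B) := not_forall.mp (mt It.ext_succ hne)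
  obtain ⟨m, hm, hmax⟩ := (Finite.wellFounded_of_trans_of_irrefl (Function.swap (ltIt r))).has_min
    {x | ¬ (x ∈ A ↔ x ∈ B)} hdiff
  have hagree : ∀ x, ltIt r m x → (x ∈ A ↔ x ∈ B) := fun x hx => not_not.mp fun h => hmax x h hx
  by_cases hmB : m ∈ B
  · exact hAB ⟨m, hmB, fun hmA => hm (iff_of_true hmA hmB), hagree⟩
  · have hmA : m ∈ A := not_not.mp fun hmA => hm (iff_of_false hmA hmB)
    exact hBA ⟨m, hmA, hmB, fun x hx => (hagree x hx).symm⟩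

instance isStrictTotalOrder_ltIt : (r : ℕ) → IsStrictTotalOrder (It r) (ltIt r)
  | 0 =>
    { irrefl := ltIt_irrefl 0
      trans := by rintro a b c ⟨-, rfl⟩ ⟨h, -⟩; cases h
      trichotomous := fun (a b : Bool) hab hba => by
        cases a <;> cases b
        exacts [rfl, absurd ⟨rfl, rfl⟩ hab, absurd ⟨rfl, rfl⟩ hba, rfl] }
  | r + 1 =>
    have := isStrictTotalOrder_ltIt r
    { irrefl := ltIt_irrefl (r + 1)
      trans := fun _ _ _ => ltIt_succ_trans
      trichotomous := fun _ _ => eq_of_not_ltIt_succ }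

theorem ltIt_of_scIt {r : ℕ} {A B : It r} (h : scIt r A B) : ltIt r A B := by
  cases r with
  | zero => exact h
  | succ r => obtain ⟨c, hcB, hcA, -, habove⟩ := h; exact ⟨c, hcB, hcA, habove⟩

theorem scIt_succ_not_between {r : ℕ} {A B : It (r + 1)} (h : scIt (r + 1) A B) (C : It (r + 1)) :
    ¬ (ltIt (r + 1) A C ∧ ltIt (r + 1) C B) := by
  obtain ⟨c, hcB, hcA, hbelow, habove⟩ := h
  rintro ⟨⟨e, heC, heA, hAC⟩, ⟨d, hdB, hdC, hCB⟩⟩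
  rcases trichotomous_of (ltIt r) d c with hdc | rfl | hcd
  · exact (hbelow d hdc).2 hdB
  · rcases trichotomous_of (ltIt r) e d with hed | rfl | hde
    · exact heA (hbelow e hed).1
    · exact hdC heC
    · exact heA ((habove e hde).2 ((hCB e hde).1 heC))
  · have hdA : d ∈ A := (habove d hcd).2 hdB
    rcases trichotomous_of (ltIt r) e d with hed | rfl | hde
    · exact hdC ((hAC d hed).1 hdA)
    · exact hdC heC
    · exact heA ((habove e (trans_of _ hcd hde)).2 ((hCB e hde).1 heC))

theorem scIt_succ_of_not_between {r : ℕ} {A B : It (r + 1)} (hAB : ltIt (r + 1) A B)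
    (hmid : ∀ C : It (r + 1), ¬ (ltIt (r + 1) A C ∧ ltIt (r + 1) C B)) : scIt (r + 1) A B := by
  obtain ⟨c, hcB, hcA, habove⟩ := hAB
  refine ⟨c, hcB, hcA, fun c' hc'c => ?_, habove⟩
  have hne : c' ≠ c := ne_of_irrefl hc'c
  have hne_above : ∀ x, ltIt r c x → x ≠ c' := fun x hx => ne_of_irrefl' (trans_of _ hc'c hx)
  constructor
  · by_contra hc'A
    refine hmid (fun x => x = c' ∨ x ∈ A) ⟨⟨c', Or.inl rfl, hc'A, fun x hx => ?_⟩,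
      ⟨c, hcB, fun h => h.elim hne.symm hcA, fun x hx => ?_⟩⟩
    · exact (or_iff_right (ne_of_irrefl' hx)).symm
    · exact (or_iff_right (hne_above x hx)).trans (habove x hx)
  · intro hc'B
    refine hmid (fun x => x ≠ c' ∧ x ∈ B) ⟨⟨c, ⟨hne.symm, hcB⟩, hcA, fun x hx => ?_⟩,
      ⟨c', hc'B, fun h => h.1 rfl, fun x hx => ?_⟩⟩
    · exact (habove x hx).trans (and_iff_right (hne_above x hx)).symm
    · exact and_iff_right (ne_of_irrefl' hx)

/-- `sc(A,B)` holds iff `B` is the immediate successor of `A` in the strict total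
order `<`. -/
theorem scIt_iff_immediate_succ (r : ℕ) (A B : It r) :
    scIt r A B ↔ (ltIt r A B ∧ ∀ C : It r, ¬ (ltIt r A C ∧ ltIt r C B)) := by
  cases r with
  | zero =>
    refine ⟨fun h => ⟨h, ?_⟩, And.left⟩
    rintro C ⟨⟨-, rfl⟩, ⟨h, -⟩⟩
    cases h
  | succ r =>
    exact ⟨fun h => ⟨ltIt_of_scIt h, scIt_succ_not_between h⟩,
      fun h => scIt_succ_of_not_between h.1 h.2⟩
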